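/- arXiv:2605.07411 — 8 statements merged into one kernel-verified Lean document; each statement's English description precedes it below -/
import Mathlib

section
/- Suppose that μ and E satisfy the super log-Sobolev inequality with some nonincreasing rate function β_SL. Then for every δ > 2 there exist constants C₅ > 0, C₆ > 0, s₀ > 0 and an integer n₀ ≥ 2 such that the set defining ξ₂(n·log δ) is nonempty for every n ≥ n₀, and μ and E satisfy the super-Poincaré inequality with the rate function β_SP defined by β_SP(s) := C₅ · inf{ δ^k : k an integer with k ≥ n₀ and ξ₂(k·log δ) ≤ C₆·s } for 0 < s ≤ s₀, and β_SP(s) := β_SP(s₀) for s > s₀; that is, μ(f²) ≤ s·E(f) + β_SP(s)·μ(|f|)² for every s > 0 and every f ∈ D. -/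
open MeasureTheory Real Set

/-- Entropy of a nonnegative function `g` with respect to `μ`:
`Ent_μ(g) = μ(g log g) - μ(g) log μ(g)` (with the convention `0 · log 0 = 0`). -/
noncomputable def Ent {Ω : Type*} [MeasurableSpace Ω] (μ : Measure Ω) (g : Ω → ℝ) : ℝ :=
  (∫ x, g x * Real.log (g x) ∂μ) - (∫ x, g x ∂μ) * Real.log (∫ x, g x ∂μ)

/-- Truncation `f_n := min((|f| - δ^{n/2})₊, δ^{(n+1)/2} - δ^{n/2})`. -/
noncomputable def trunc {Ω : Type*} (f : Ω → ℝ) (δ : ℝ) (n : ℕ) : Ω → ℝ :=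
  fun x => min (max (|f x| - δ ^ ((n : ℝ) / 2)) 0) (δ ^ (((n : ℝ) + 1) / 2) - δ ^ ((n : ℝ) / 2))

/-- The `μ`-essential supremum of `|f|`. -/
noncomputable def essNorm {Ω : Type*} [MeasurableSpace Ω] (μ : Measure Ω) (f : Ω → ℝ) : ℝ :=
  (eLpNorm f ⊤ μ).toReal

/-- `ξ₁(t) := inf { r / (1 - t β(r)) : r > 0, 1 - t β(r) > 0 }`. -/
noncomputable def xi1 (β : ℝ → ℝ) (t : ℝ) : ℝ :=
  sInf {y | ∃ r, 0 < r ∧ 0 < 1 - t * β r ∧ y = r / (1 - t * β r)}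

/-- `ξ₂(t) := inf { r / (t - β(r)) : r > 0, t - β(r) > 0 }`. -/
noncomputable def xi2 (β : ℝ → ℝ) (t : ℝ) : ℝ :=
  sInf {y | ∃ r, 0 < r ∧ 0 < t - β r ∧ y = r / (t - β r)}

/-! ### Auxiliary lemmas -/

/-- Tangent-line inequality for `x log x` at `c`. -/
lemma tangent_line {x c : ℝ} (hc : 0 < c) (hx : 0 ≤ x) :
    x * Real.log c + (x - c) ≤ x * Real.log x := by
  rcases hx.eq_or_lt with h | h
  · simp [← h]; linarith
  · have h1 : Real.log (c / x) ≤ c / x - 1 := Real.log_le_sub_one_of_pos (by positivity)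
    rw [Real.log_div hc.ne' h.ne'] at h1
    have h2 := mul_le_mul_of_nonneg_left h1 h.le
    have h3 : x * (c / x - 1) = c - x := by field_simp
    rw [h3] at h2
    nlinarith

/-- Bound for `|y log y|` on `[0, B]`. -/
lemma abs_mul_log_le {y B : ℝ} (hy : 0 ≤ y) (hB : y ≤ B) :
    |y * Real.log y| ≤ 1 + B ^ 2 := by
  rcases hy.eq_or_lt with h | h
  · rw [← h]; simp; positivity
  · by_cases h1 : y ≤ 1
    · have h2 := Real.abs_log_mul_self_lt y h h1
      rw [mul_comm] at h2
      nlinarith [sq_nonneg B]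
    · push_neg at h1
      have hlog1 : 0 ≤ Real.log y := Real.log_nonneg h1.le
      have hlog2 : Real.log y ≤ y - 1 := Real.log_le_sub_one_of_pos h
      rw [abs_of_nonneg (by positivity)]
      nlinarith

/-- Bounded measurable functions are integrable against a finite measure. -/
lemma integrable_of_bdd {Ω : Type*} [MeasurableSpace Ω] {μ : Measure Ω} [IsFiniteMeasure μ]
    {g : Ω → ℝ} (hg : Measurable g) (C : ℝ) (h : ∀ x, |g x| ≤ C) : Integrable g μ :=
  ⟨hg.aestronglyMeasurable,
    MeasureTheory.HasFiniteIntegral.of_bounded (C := C)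
      (ae_of_all _ (by simpa [Real.norm_eq_abs] using h))⟩

/-- Lower bound for the entropy of `f²` in terms of `μ(f²)` and `μ(|f|)`:
`Ent(f²) ≥ μ(f²) log (μ(f²) / μ(|f|)²)`. -/
lemma ent_lower {Ω : Type*} [MeasurableSpace Ω] (μ : Measure Ω) [IsProbabilityMeasure μ]
    {f : Ω → ℝ} (hf : Measurable f) (M : ℝ) (hM : ∀ x, |f x| ≤ M)
    (hN : 0 < ∫ x, f x ^ 2 ∂μ) (hL : 0 < ∫ x, |f x| ∂μ) :
    (∫ x, f x ^ 2 ∂μ) *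
        (Real.log (∫ x, f x ^ 2 ∂μ) - 2 * Real.log (∫ x, |f x| ∂μ)) ≤
      Ent μ (fun x => f x ^ 2) := by
  have hb2 : ∀ x, |f x ^ 2| ≤ M ^ 2 := fun x => by
    rw [abs_of_nonneg (sq_nonneg _), ← sq_abs]
    exact pow_le_pow_left₀ (abs_nonneg _) (hM x) 2
  have int_f2 : Integrable (fun x => f x ^ 2) μ :=
    integrable_of_bdd (hf.pow_const 2) (M ^ 2) hb2
  have int_fabs : Integrable (fun x => |f x|) μ :=
    integrable_of_bdd hf.abs M (fun x => by rw [abs_abs]; exact hM x)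
  have int_f2log : Integrable (fun x => f x ^ 2 * Real.log (f x ^ 2)) μ := by
    refine integrable_of_bdd
      ((hf.pow_const 2).mul (Real.measurable_log.comp (hf.pow_const 2)))
      (1 + (M ^ 2) ^ 2) (fun x => ?_)
    have hx2 : f x ^ 2 ≤ M ^ 2 := by
      have := hb2 x; rwa [abs_of_nonneg (sq_nonneg _)] at this
    exact abs_mul_log_le (sq_nonneg _) hx2
  set N := ∫ x, f x ^ 2 ∂μ with hNdef
  set L := ∫ x, |f x| ∂μ with hLdef
  set c := N / L with hcdef
  have hc : 0 < c := div_pos hN hL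
  have pointwise : ∀ x, 2 * ((Real.log c + 1) * f x ^ 2 - c * |f x|) ≤
      f x ^ 2 * Real.log (f x ^ 2) := by
    intro x
    have t := tangent_line hc (abs_nonneg (f x))
    have t2 := mul_le_mul_of_nonneg_left t (abs_nonneg (f x))
    have hsq : f x ^ 2 = |f x| ^ 2 := (sq_abs _).symm
    have hlog : Real.log (f x ^ 2) = 2 * Real.log |f x| := by
      rw [hsq, Real.log_pow]; push_cast; ring
    rw [hlog, hsq]
    nlinarith [t2]
  have int_lhs : Integrable (fun x => 2 * ((Real.log c + 1) * f x ^ 2 - c * |f x|)) μ :=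
    ((int_f2.const_mul _).sub (int_fabs.const_mul _)).const_mul 2
  have key := integral_mono int_lhs int_f2log pointwise
  have hcL : c * L = N := by
    rw [hcdef]; field_simp
  have lhs_eq : (∫ x, 2 * ((Real.log c + 1) * f x ^ 2 - c * |f x|) ∂μ) =
      2 * N * Real.log c := by
    rw [integral_const_mul, integral_sub (int_f2.const_mul _) (int_fabs.const_mul _),
      integral_const_mul, integral_const_mul, ← hNdef, ← hLdef]
    rw [show (Real.log c + 1) * N - c * L = (Real.log c + 1) * N - N from by rw [hcL]]
    ring
  have hlogc : Real.log c = Real.log N - Real.log L := Real.log_div hN.ne' hL.ne'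
  rw [lhs_eq, hlogc] at key
  show N * (Real.log N - 2 * Real.log L) ≤ Ent μ fun x => f x ^ 2
  have hent : Ent μ (fun x => f x ^ 2) =
      (∫ x, f x ^ 2 * Real.log (f x ^ 2) ∂μ) - N * Real.log N := by
    simp only [Ent, ← hNdef]
  rw [hent]
  linarith

set_option maxHeartbeats 1000000 in
/-- Theorem 1.2 (2): SLSI implies SPI with the explicit rate function (1.13). -/
theorem slsi_implies_spi {Ω : Type*} [MeasurableSpace Ω] (μ : Measure Ω) [IsProbabilityMeasure μ]
    (D : Set (Ω → ℝ)) (E : (Ω → ℝ) → ℝ)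
    (hD : ∀ f ∈ D, Measurable f ∧ ∃ M : ℝ, ∀ x, |f x| ≤ M)
    (hE : ∀ f, 0 ≤ E f)
    (htrunc : ∀ f ∈ D, ∀ δ : ℝ, 2 < δ →
      (∀ n : ℕ, trunc f δ n ∈ D) ∧ ∑' n : ℕ, E (trunc f δ n) ≤ E f)
    (βSL : ℝ → ℝ) (hβSLpos : ∀ s : ℝ, 0 < s → 0 < βSL s)
    (hβSLanti : ∀ s t : ℝ, 0 < s → s ≤ t → βSL t ≤ βSL s)
    (hSLSI : ∀ s : ℝ, 0 < s → ∀ f ∈ D,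
      Ent μ (fun x => f x ^ 2) ≤ s * E f + βSL s * (∫ x, f x ^ 2 ∂μ)) :
    ∀ δ : ℝ, 2 < δ → ∃ C₅ > (0 : ℝ), ∃ C₆ > (0 : ℝ), ∃ s₀ > (0 : ℝ), ∃ n₀ : ℕ, 2 ≤ n₀ ∧
      (∀ n : ℕ, n₀ ≤ n →
        ({y | ∃ r, 0 < r ∧ 0 < (n : ℝ) * Real.log δ - βSL r ∧
          y = r / ((n : ℝ) * Real.log δ - βSL r)}.Nonempty)) ∧
      ∃ βSP : ℝ → ℝ,
        (∀ s : ℝ, 0 < s → s ≤ s₀ → βSP s =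
          C₅ * sInf {y | ∃ k : ℕ, n₀ ≤ k ∧
            xi2 βSL ((k : ℝ) * Real.log δ) ≤ C₆ * s ∧ y = δ ^ (k : ℝ)}) ∧
        (∀ s : ℝ, s₀ < s → βSP s = βSP s₀) ∧
        (∀ s : ℝ, 0 < s → ∀ f ∈ D,
          (∫ x, f x ^ 2 ∂μ) ≤ s * E f + βSP s * (∫ x, |f x| ∂μ) ^ 2) := by
  intro δ hδ
  have hδ1 : (1 : ℝ) < δ := by linarith
  have hδ0 : (0 : ℝ) < δ := by linarith
  have hlδ : 0 < Real.log δ := Real.log_pos hδ1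
  set n₀ : ℕ := max 2 (⌈βSL 1 / Real.log δ⌉₊ + 1) with hn₀def
  have hn₀2 : 2 ≤ n₀ := le_max_left _ _
  have hn₀β : βSL 1 < (n₀ : ℝ) * Real.log δ := by
    have h1 : βSL 1 / Real.log δ < (n₀ : ℝ) := by
      have h := Nat.le_ceil (βSL 1 / Real.log δ)
      have h2 : (⌈βSL 1 / Real.log δ⌉₊ + 1 : ℕ) ≤ n₀ := le_max_right _ _
      have h3 : ((⌈βSL 1 / Real.log δ⌉₊ + 1 : ℕ) : ℝ) ≤ (n₀ : ℝ) := by exact_mod_cast h2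
      push_cast at h3
      linarith
    calc βSL 1 = (βSL 1 / Real.log δ) * Real.log δ := by field_simp
    _ < (n₀ : ℝ) * Real.log δ := mul_lt_mul_of_pos_right h1 hlδ
  -- elements and bounds for the xi2-defining sets
  have memA : ∀ t : ℝ, βSL 1 < t →
      (1 / (t - βSL 1)) ∈ {y | ∃ r, 0 < r ∧ 0 < t - βSL r ∧ y = r / (t - βSL r)} :=
    fun t ht => ⟨1, one_pos, by linarith, rfl⟩
  have bddA : ∀ t : ℝ, BddBelow {y | ∃ r, 0 < r ∧ 0 < t - βSL r ∧ y = r / (t - βSL r)} := by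
    intro t
    refine ⟨0, ?_⟩
    rintro y ⟨r, hr, hd, rfl⟩
    positivity
  have hge : ∀ n : ℕ, n₀ ≤ n → βSL 1 < (n : ℝ) * Real.log δ := by
    intro n hn
    have : (n₀ : ℝ) ≤ (n : ℝ) := by exact_mod_cast hn
    nlinarith
  refine ⟨1, one_pos, 1, one_pos, 1, one_pos, n₀, hn₀2, ?_, ?_⟩
  · intro n hn
    exact ⟨_, memA _ (hge n hn)⟩
  refine ⟨fun s => sInf {y | ∃ k : ℕ, n₀ ≤ k ∧
      xi2 βSL ((k : ℝ) * Real.log δ) ≤ min s 1 ∧ y = δ ^ (k : ℝ)}, ?_, ?_, ?_⟩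
  · intro s hs hs1
    simp only [one_mul, min_eq_left hs1]
  · intro s hs
    simp only [min_eq_right hs.le, min_self]
  · intro s hs f hfD
    obtain ⟨hfm, M, hM⟩ := hD f hfD
    set M' : ℝ := max M 0 with hM'def
    have hM' : ∀ x, |f x| ≤ M' := fun x => (hM x).trans (le_max_left _ _)
    have hM'0 : 0 ≤ M' := le_max_right _ _
    set N := ∫ x, f x ^ 2 ∂μ with hNdef
    set L := ∫ x, |f x| ∂μ with hLdef
    have hL0 : 0 ≤ L := integral_nonneg fun x => abs_nonneg _
    have hN0 : 0 ≤ N := integral_nonneg fun x => sq_nonneg _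
    have hb2 : ∀ x, |f x ^ 2| ≤ M' ^ 2 := fun x => by
      rw [abs_of_nonneg (sq_nonneg _), ← sq_abs]
      exact pow_le_pow_left₀ (abs_nonneg _) (hM' x) 2
    have int_f2 : Integrable (fun x => f x ^ 2) μ :=
      integrable_of_bdd (hfm.pow_const 2) (M' ^ 2) hb2
    have int_fabs : Integrable (fun x => |f x|) μ :=
      integrable_of_bdd hfm.abs M' (fun x => by rw [abs_abs]; exact hM' x)
    have hNML : N ≤ M' * L := by
      have hpt : ∀ x, f x ^ 2 ≤ M' * |f x| := fun x => by
        rw [← sq_abs]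
        nlinarith [abs_nonneg (f x), hM' x]
      calc N ≤ ∫ x, M' * |f x| ∂μ := integral_mono int_f2 (int_fabs.const_mul _) hpt
      _ = M' * L := by rw [integral_const_mul]
    set s' := min s 1 with hs'def
    have hs'0 : 0 < s' := lt_min hs one_pos
    have hs's : s' ≤ s := min_le_left _ _
    -- key estimate for each admissible k
    have key : ∀ k : ℕ, n₀ ≤ k → xi2 βSL ((k : ℝ) * Real.log δ) ≤ s' →
        N ≤ s' * E f + δ ^ (k : ℝ) * L ^ 2 := by
      intro k hk hxk
      set t := (k : ℝ) * Real.log δ with htdef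
      have ht : βSL 1 < t := hge k hk
      have hδk : (0 : ℝ) < δ ^ (k : ℝ) := Real.rpow_pos_of_pos hδ0 _
      by_cases hcase : N ≤ δ ^ (k : ℝ) * L ^ 2
      · nlinarith [mul_nonneg hs'0.le (hE f)]
      push_neg at hcase
      have hL : 0 < L := by
        rcases hL0.eq_or_lt with h | h
        · exfalso
          rw [← h] at hcase hNML
          simp only [mul_zero] at hNML
          nlinarith
        · exact h
      have hN : 0 < N := lt_of_le_of_lt (by positivity) hcase
      have hlogN : t + 2 * Real.log L ≤ Real.log N := by
        have h1 : Real.log (δ ^ (k : ℝ) * L ^ 2) < Real.log N :=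
          Real.log_lt_log (by positivity) hcase
        rw [Real.log_mul (by positivity) (by positivity), Real.log_rpow hδ0,
          Real.log_pow] at h1
        push_cast at h1
        linarith
      have hAdom : ∀ y ∈ {y | ∃ r, 0 < r ∧ 0 < t - βSL r ∧ y = r / (t - βSL r)},
          N ≤ y * E f := by
        rintro y ⟨r, hr, hd, rfl⟩
        have hslsi := hSLSI r hr f hfD
        have hent := ent_lower μ hfm M' hM' hN hL
        have h2 : N * t ≤ r * E f + βSL r * N := by
          have h4 : N * t ≤ N * (Real.log N - 2 * Real.log L) := by nlinarith
          calc N * t ≤ N * (Real.log N - 2 * Real.log L) := h4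
          _ ≤ Ent μ fun x => f x ^ 2 := hent
          _ ≤ r * E f + βSL r * N := hslsi
        rw [div_mul_eq_mul_div, le_div_iff₀ hd]
        have hexp : N * (t - βSL r) = N * t - βSL r * N := by ring
        linarith [h2, hexp.le, hexp.ge]
      have hne_t : Set.Nonempty {y | ∃ r, 0 < r ∧ 0 < t - βSL r ∧ y = r / (t - βSL r)} :=
        ⟨_, memA t ht⟩
      rcases (hE f).eq_or_lt with hEf | hEf
      · exfalso
        obtain ⟨y, hy⟩ := hne_t
        have h5 := hAdom y hy
        rw [← hEf, mul_zero] at h5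
        linarith
      · have h3 : N / E f ≤ xi2 βSL t :=
          le_csInf hne_t fun y hy => (div_le_iff₀ hEf).mpr (hAdom y hy)
        have h4 : N ≤ s' * E f := by
          have h6 := (div_le_iff₀ hEf).mp (h3.trans hxk)
          linarith
        have h7 : 0 ≤ δ ^ (k : ℝ) * L ^ 2 := mul_nonneg hδk.le (sq_nonneg L)
        linarith
    -- nonemptiness of the set defining βSP at s'
    have hSne : Set.Nonempty {y | ∃ k : ℕ, n₀ ≤ k ∧
        xi2 βSL ((k : ℝ) * Real.log δ) ≤ s' ∧ y = δ ^ (k : ℝ)} := by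
      set k : ℕ := max n₀ ⌈(βSL 1 + 1 / s') / Real.log δ⌉₊ with hkdef
      have hk1 : n₀ ≤ k := le_max_left _ _
      have hk2 : βSL 1 + 1 / s' ≤ (k : ℝ) * Real.log δ := by
        have h := Nat.le_ceil ((βSL 1 + 1 / s') / Real.log δ)
        have h7 : (⌈(βSL 1 + 1 / s') / Real.log δ⌉₊ : ℝ) ≤ (k : ℝ) := by
          exact_mod_cast le_max_right _ _
        have h8 := h.trans h7
        have h9 := mul_le_mul_of_nonneg_right h8 hlδ.le
        rwa [div_mul_cancel₀ _ hlδ.ne'] at h9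
      have hinv : 0 < 1 / s' := by positivity
      have ht : βSL 1 < (k : ℝ) * Real.log δ := by linarith
      have hxk : xi2 βSL ((k : ℝ) * Real.log δ) ≤ s' := by
        have h9 : xi2 βSL ((k : ℝ) * Real.log δ) ≤ 1 / ((k : ℝ) * Real.log δ - βSL 1) :=
          csInf_le (bddA _) (memA _ ht)
        have h10 : 1 / ((k : ℝ) * Real.log δ - βSL 1) ≤ 1 / (1 / s') := by
          apply one_div_le_one_div_of_le hinv
          linarith
        rw [one_div_one_div] at h10
        linarith
      exact ⟨δ ^ (k : ℝ), k, hk1, hxk, rfl⟩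
    -- conclusion
    show N ≤ s * E f + sInf {y | ∃ k : ℕ, n₀ ≤ k ∧
      xi2 βSL ((k : ℝ) * Real.log δ) ≤ min s 1 ∧ y = δ ^ (k : ℝ)} * L ^ 2
    rw [← hs'def]
    rcases hL0.eq_or_lt with hLz | hLpos
    · have hNz : N ≤ 0 := by rw [← hLz, mul_zero] at hNML; exact hNML
      have hβnn : 0 ≤ sInf {y | ∃ k : ℕ, n₀ ≤ k ∧
          xi2 βSL ((k : ℝ) * Real.log δ) ≤ s' ∧ y = δ ^ (k : ℝ)} := by
        apply le_csInf hSne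
        rintro y ⟨k, hk, hxk, rfl⟩
        positivity
      rw [← hLz]
      nlinarith [mul_nonneg hs.le (hE f), hβnn]
    · have hlow : ∀ y ∈ {y | ∃ k : ℕ, n₀ ≤ k ∧
          xi2 βSL ((k : ℝ) * Real.log δ) ≤ s' ∧ y = δ ^ (k : ℝ)},
          (N - s * E f) / L ^ 2 ≤ y := by
        rintro y ⟨k, hk, hxk, rfl⟩
        rw [div_le_iff₀ (by positivity)]
        have := key k hk hxk
        nlinarith [hE f]
      have h11 := le_csInf hSne hlow
      rw [div_le_iff₀ (by positivity)] at h11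
      linarith
end

section
/- Let θ ∈ [1/2, 1) and C₂ > 0, and suppose that μ and E satisfy the super log-Sobolev inequality with rate function β_SL(s) = C₂(1 + s^{−θ/(1−θ)}), s > 0. Then there exists a constant C₁ > 0 such that μ and E satisfy the super-Poincaré inequality with rate function β_SP(s) = exp(C₁(1 + s^{−θ})), s > 0; that is, μ(f²) ≤ s·E(f) + exp(C₁(1 + s^{−θ}))·μ(|f|)² for every s > 0 and every f ∈ D. -/
open MeasureTheory Real Set

/-! Since `u² log u² ≥ 2((log c + 1) u² - c u)` (tangent line of `log` at `c / u`), choosing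
`c = μ(f²) / μ(|f|)` gives the classical bound `Ent_μ(f²) ≥ μ(f²) log (μ(f²) / μ(|f|)²)`.
Combined with the SLSI at `r`, whenever `log (μ(f²) / μ(|f|)²) > β_SL(r) + t` this leaves
`t μ(f²) ≤ r E(f)`: hence the SPI holds with `β_SP(r / t) = exp (β_SL(r) + t)`.
For `β_SL(r) = C₂(1 + r^{-θ/(1-θ)})` take `r = s^{1-θ}` and `t = s^{-θ}`. -/

lemma two_mul_sub_le_sq_mul_log_sq {c u : ℝ} (hc : 0 < c) (hu : 0 ≤ u) :
    2 * ((log c + 1) * u ^ 2 - c * u) ≤ u ^ 2 * log (u ^ 2) := by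
  rcases hu.eq_or_lt with rfl | hu
  · simp
  have htangent : log c - log u ≤ c / u - 1 := by
    rw [← log_div hc.ne' hu.ne']
    exact log_le_sub_one_of_pos (div_pos hc hu)
  have hcu : u ^ 2 * (c / u - 1) = c * u - u ^ 2 := by field_simp
  rw [log_pow]
  push_cast
  nlinarith [mul_le_mul_of_nonneg_left htangent (sq_nonneg u)]

section Entropy

variable {Ω : Type*} [MeasurableSpace Ω] {μ : Measure Ω} {f : Ω → ℝ}

lemma integral_abs_pos_of_integral_sq_pos (hf : Integrable f μ) (h : 0 < ∫ x, f x ^ 2 ∂μ) :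
    0 < ∫ x, |f x| ∂μ := by
  refine (integral_nonneg fun x => abs_nonneg (f x)).lt_of_ne' fun h0 => h.ne' ?_
  have hzero : (fun x => |f x|) =ᵐ[μ] 0 :=
    (integral_eq_zero_iff_of_nonneg (fun x => abs_nonneg _) hf.abs).mp h0
  refine integral_eq_zero_of_ae ?_
  filter_upwards [hzero] with x hx
  simp [abs_eq_zero.mp hx]

lemma integral_sq_mul_log_le_ent (hf : Integrable f μ) (hf2 : Integrable (fun x => f x ^ 2) μ)
    (hflog : Integrable (fun x => f x ^ 2 * log (f x ^ 2)) μ) (hA : 0 < ∫ x, f x ^ 2 ∂μ) :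
    (∫ x, f x ^ 2 ∂μ) * log ((∫ x, f x ^ 2 ∂μ) / (∫ x, |f x| ∂μ) ^ 2) ≤
      Ent μ (fun x => f x ^ 2) := by
  set A := ∫ x, f x ^ 2 ∂μ
  set B := ∫ x, |f x| ∂μ
  have hB : 0 < B := integral_abs_pos_of_integral_sq_pos hf hA
  have hpointwise : ∀ x, 2 * ((log (A / B) + 1) * f x ^ 2 - A / B * |f x|) ≤
      f x ^ 2 * log (f x ^ 2) := fun x => by
    simpa only [sq_abs] using two_mul_sub_le_sq_mul_log_sq (div_pos hA hB) (abs_nonneg (f x))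
  have hintegral : 2 * ((log (A / B) + 1) * A - A / B * B) ≤
      ∫ x, f x ^ 2 * log (f x ^ 2) ∂μ :=
    calc _ = ∫ x, 2 * ((log (A / B) + 1) * f x ^ 2 - A / B * |f x|) ∂μ := by
          rw [integral_const_mul, integral_sub (hf2.const_mul _) (hf.abs.const_mul _),
            integral_const_mul, integral_const_mul]
      _ ≤ _ := integral_mono (((hf2.const_mul _).sub (hf.abs.const_mul _)).const_mul 2)
          hflog hpointwise
  have hent : Ent μ (fun x => f x ^ 2) = ∫ x, f x ^ 2 * log (f x ^ 2) ∂μ - A * log A := rfl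
  rw [div_mul_cancel₀ _ hB.ne', log_div hA.ne' hB.ne'] at hintegral
  rw [hent, log_div hA.ne' (by positivity), log_pow]
  push_cast
  linarith

lemma integral_sq_le_of_ent_le (hf : Integrable f μ) (hf2 : Integrable (fun x => f x ^ 2) μ)
    (hflog : Integrable (fun x => f x ^ 2 * log (f x ^ 2)) μ) {e r t β : ℝ} (he : 0 ≤ e)
    (hr : 0 ≤ r) (ht : 0 < t)
    (hslsi : Ent μ (fun x => f x ^ 2) ≤ r * e + β * ∫ x, f x ^ 2 ∂μ) :
    ∫ x, f x ^ 2 ∂μ ≤ r / t * e + exp (β + t) * (∫ x, |f x| ∂μ) ^ 2 := by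
  set A := ∫ x, f x ^ 2 ∂μ
  set B := ∫ x, |f x| ∂μ
  have hre : 0 ≤ r / t * e := by positivity
  by_cases hsmall : A ≤ exp (β + t) * B ^ 2
  · linarith
  push Not at hsmall
  have hA : 0 < A := lt_of_le_of_lt (by positivity) hsmall
  have hB : 0 < B := integral_abs_pos_of_integral_sq_pos hf hA
  have hlog : β + t < log (A / B ^ 2) := by
    rw [lt_log_iff_exp_lt (by positivity), lt_div_iff₀ (by positivity)]
    exact hsmall
  have hent : A * log (A / B ^ 2) ≤ _ := integral_sq_mul_log_le_ent hf hf2 hflog hA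
  have htA : t * A ≤ r * e := by nlinarith
  have hA_le : A ≤ r / t * e := by rw [div_mul_eq_mul_div, le_div_iff₀ ht]; linarith
  linarith [mul_nonneg (exp_pos (β + t)).le (sq_nonneg B)]

lemma integrable_sq_of_bounded [IsFiniteMeasure μ] (hf : Measurable f) {M : ℝ}
    (hM : ∀ x, |f x| ≤ M) : Integrable (fun x => f x ^ 2) μ :=
  Integrable.of_bound (hf.pow_const 2).aestronglyMeasurable (M ^ 2) (ae_of_all _ fun x => by
    rw [norm_pow, norm_eq_abs]
    exact pow_le_pow_left₀ (abs_nonneg _) (hM x) 2)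

lemma integrable_sq_mul_log_sq_of_bounded [IsFiniteMeasure μ] (hf : Measurable f) {M : ℝ}
    (hM : ∀ x, |f x| ≤ M) : Integrable (fun x => f x ^ 2 * log (f x ^ 2)) μ := by
  obtain ⟨C, hC⟩ := (isCompact_Icc (a := 0) (b := M ^ 2)).exists_bound_of_continuousOn
    continuous_mul_log.continuousOn
  refine Integrable.of_bound ((hf.pow_const 2).mul (hf.pow_const 2).log).aestronglyMeasurable C
    (ae_of_all _ fun x => hC _ ⟨sq_nonneg _, ?_⟩)
  rw [← sq_abs]
  exact pow_le_pow_left₀ (abs_nonneg _) (hM x) 2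

end Entropy

lemma rpow_one_sub_rpow_neg_div_one_sub {s θ : ℝ} (hs : 0 < s) (hθ : θ < 1) :
    (s ^ (1 - θ)) ^ (-(θ / (1 - θ))) = s ^ (-θ) := by
  rw [← rpow_mul hs.le]
  congr 1
  field_simp [(sub_pos.mpr hθ).ne']

theorem example_slsi_to_spi_general {Ω : Type*} [MeasurableSpace Ω] (μ : Measure Ω) [IsProbabilityMeasure μ]
    (D : Set (Ω → ℝ)) (E : (Ω → ℝ) → ℝ)
    (hD : ∀ f ∈ D, Measurable f ∧ ∃ M : ℝ, ∀ x, |f x| ≤ M)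
    (hE : ∀ f, 0 ≤ E f)
    (θ C₂ : ℝ) (hθ₂ : θ < 1) (hC₂ : 0 < C₂)
    (hSLSI : ∀ s : ℝ, 0 < s → ∀ f ∈ D,
      Ent μ (fun x => f x ^ 2) ≤
        s * E f + C₂ * (1 + s ^ (-(θ / (1 - θ)))) * (∫ x, f x ^ 2 ∂μ)) :
    ∃ C₁ > (0 : ℝ), ∀ s : ℝ, 0 < s → ∀ f ∈ D,
      (∫ x, f x ^ 2 ∂μ) ≤ s * E f + Real.exp (C₁ * (1 + s ^ (-θ))) * (∫ x, |f x| ∂μ) ^ 2 := by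
  refine ⟨1 + C₂, by linarith, fun s hs f hfD => ?_⟩
  obtain ⟨hfm, M, hM⟩ := hD f hfD
  have hf : Integrable f μ := Integrable.of_bound hfm.aestronglyMeasurable M (ae_of_all _ hM)
  have hr : 0 < s ^ (1 - θ) := rpow_pos_of_pos hs _
  have ht : 0 < s ^ (-θ) := rpow_pos_of_pos hs _
  have hslsi := hSLSI _ hr f hfD
  rw [rpow_one_sub_rpow_neg_div_one_sub hs hθ₂] at hslsi
  have hspi := integral_sq_le_of_ent_le hf (integrable_sq_of_bounded hfm hM)
    (integrable_sq_mul_log_sq_of_bounded hfm hM) (hE f) hr.le ht hslsi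
  have hscale : s ^ (1 - θ) / s ^ (-θ) = s := by rw [← rpow_sub hs]; simp
  have hrate : C₂ * (1 + s ^ (-θ)) + s ^ (-θ) ≤ (1 + C₂) * (1 + s ^ (-θ)) := by linarith
  calc ∫ x, f x ^ 2 ∂μ
      ≤ s * E f + exp (C₂ * (1 + s ^ (-θ)) + s ^ (-θ)) * (∫ x, |f x| ∂μ) ^ 2 := by
        rwa [hscale] at hspi
    _ ≤ s * E f + exp ((1 + C₂) * (1 + s ^ (-θ))) * (∫ x, |f x| ∂μ) ^ 2 := by
        gcongr

/-- Example 1.4 (2), first part: SLSI with rate `C₂(1 + s^{-θ/(1-θ)})`, `θ ∈ [1/2, 1)`,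
implies SPI with rate `exp(C₁(1 + s^{-θ}))`. -/
theorem example_slsi_to_spi {Ω : Type*} [MeasurableSpace Ω] (μ : Measure Ω) [IsProbabilityMeasure μ]
    (D : Set (Ω → ℝ)) (E : (Ω → ℝ) → ℝ)
    (hD : ∀ f ∈ D, Measurable f ∧ ∃ M : ℝ, ∀ x, |f x| ≤ M)
    (hE : ∀ f, 0 ≤ E f)
    (htrunc : ∀ f ∈ D, ∀ δ : ℝ, 2 < δ →
      (∀ n : ℕ, trunc f δ n ∈ D) ∧ ∑' n : ℕ, E (trunc f δ n) ≤ E f)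
    (θ C₂ : ℝ) (hθ₁ : 1 / 2 ≤ θ) (hθ₂ : θ < 1) (hC₂ : 0 < C₂)
    (hSLSI : ∀ s : ℝ, 0 < s → ∀ f ∈ D,
      Ent μ (fun x => f x ^ 2) ≤
        s * E f + C₂ * (1 + s ^ (-(θ / (1 - θ)))) * (∫ x, f x ^ 2 ∂μ)) :
    ∃ C₁ > (0 : ℝ), ∀ s : ℝ, 0 < s → ∀ f ∈ D,
      (∫ x, f x ^ 2 ∂μ) ≤ s * E f + Real.exp (C₁ * (1 + s ^ (-θ))) * (∫ x, |f x| ∂μ) ^ 2 :=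
  example_slsi_to_spi_general μ D E hD hE θ C₂ hθ₂ hC₂ hSLSI
end

section
/- Let μ be a probability measure on a measurable space (Ω, 𝓕), let g : Ω → [0,∞) be measurable with g and g·log g integrable with respect to μ, and let S ∈ 𝓕 be such that g = 0 μ-almost everywhere on Ω ∖ S. If μ(S) ≤ e^{−c} for some c > 0, then c·∫_Ω g dμ ≤ Ent_μ(g). -/
open MeasureTheory Real Set

/-! The tangent-line bound `x log x ≥ x log t + x - t`, integrated over `S`, gives
`∫ g log g ≥ I log t + I - t μ(S)` for every `t > 0`, where `I = ∫ g`. Taking `t = I e^c`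
makes `t μ(S) ≤ I` and leaves `Ent_μ(g) ≥ c I`; to allow `I = 0` one takes `t = (I + ε) e^c`
and lets `ε → 0`. -/

theorem Real.mul_log_add_sub_le_mul_log {x t : ℝ} (hx : 0 ≤ x) (ht : 0 < t) :
    x * log t + x - t ≤ x * log x := by
  rcases hx.eq_or_lt with rfl | hx
  · simpa using ht.le
  have h := log_le_sub_one_of_pos (div_pos ht hx)
  rw [log_div ht.ne' hx.ne', div_sub_one hx.ne', le_div_iff₀ hx] at h
  linarith

theorem integral_mul_log_add_sub_le_integral_mul_log {Ω : Type*} [MeasurableSpace Ω]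
    {μ : Measure Ω} {g : Ω → ℝ} {S : Set Ω} (hg0 : ∀ x, 0 ≤ g x) (hgi : Integrable g μ)
    (hgl : Integrable (fun x => g x * log (g x)) μ) (hgS : ∀ᵐ x ∂μ, x ∉ S → g x = 0)
    (hμS : μ S ≠ ⊤) {t : ℝ} (ht : 0 < t) :
    (∫ x, g x ∂μ) * log t + ∫ x, g x ∂μ - t * μ.real S ≤ ∫ x, g x * log (g x) ∂μ := by
  have hglS : ∀ᵐ x ∂μ, x ∉ S → g x * log (g x) = 0 := by
    filter_upwards [hgS] with x hx hxS
    simp [hx hxS]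
  have hIS : ∫ x in S, g x ∂μ = ∫ x, g x ∂μ := setIntegral_eq_integral_of_ae_compl_eq_zero hgS
  have hint : IntegrableOn (fun x => g x * log t) S μ := hgi.restrict.mul_const _
  have hint' : IntegrableOn (fun x => g x * log t + g x) S μ := hint.add hgi.restrict
  calc (∫ x, g x ∂μ) * log t + ∫ x, g x ∂μ - t * μ.real S
      = ∫ x in S, g x * log t + g x - t ∂μ := by
        rw [integral_sub hint' (integrableOn_const hμS),
          integral_add hint hgi.restrict, integral_mul_const, setIntegral_const, hIS,
          smul_eq_mul, mul_comm t]
    _ ≤ ∫ x in S, g x * log (g x) ∂μ :=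
        setIntegral_mono (hint'.sub (integrableOn_const hμS)) hgl.restrict
          fun x => mul_log_add_sub_le_mul_log (hg0 x) ht
    _ = ∫ x, g x * log (g x) ∂μ := setIntegral_eq_integral_of_ae_compl_eq_zero hglS

theorem mul_integral_le_ent_of_support_small_general {Ω : Type*} [MeasurableSpace Ω]
    (μ : Measure Ω) [IsProbabilityMeasure μ]
    (g : Ω → ℝ) (hg0 : ∀ x, 0 ≤ g x)
    (hgi : Integrable g μ)
    (hgl : Integrable (fun x => g x * Real.log (g x)) μ)
    (S : Set Ω)
    (hgS : ∀ᵐ x ∂μ, x ∉ S → g x = 0)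
    (c : ℝ) (hμS : μ S ≤ ENNReal.ofReal (Real.exp (-c))) :
    c * ∫ x, g x ∂μ ≤ Ent μ g := by
  set I := ∫ x, g x ∂μ
  have hI0 : 0 ≤ I := integral_nonneg hg0
  have hm : μ.real S * exp c ≤ 1 := by
    have := ENNReal.toReal_mono ENNReal.ofReal_ne_top hμS
    rw [ENNReal.toReal_ofReal (exp_pos _).le, exp_neg] at this
    exact (le_inv_mul_iff₀' (exp_pos c)).mp (by simpa [measureReal_def, mul_comm] using this)
  refine le_of_forall_pos_le_add fun ε hε => ?_
  have key := integral_mul_log_add_sub_le_integral_mul_log hg0 hgi hgl hgS (measure_ne_top μ S)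
    (t := (I + ε) * exp c) (by positivity)
  have hlog : I * log I ≤ I * log (I + ε) := by
    rcases hI0.eq_or_lt with hI | hI
    · simp [← hI]
    · exact mul_le_mul_of_nonneg_left (log_le_log hI (by linarith)) hI0
  have hmass : (I + ε) * exp c * μ.real S ≤ I + ε := by
    linarith [mul_le_mul_of_nonneg_left hm (by linarith : 0 ≤ I + ε)]
  rw [log_mul (by positivity) (exp_pos c).ne', log_exp] at key
  rw [Ent]
  linarith

/-- Entropy lower bound: if `g` vanishes a.e. off a set `S` of measure at most `e^{-c}`,
then `c ∫ g dμ ≤ Ent_μ(g)`. -/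
theorem mul_integral_le_ent_of_support_small {Ω : Type*} [MeasurableSpace Ω]
    (μ : Measure Ω) [IsProbabilityMeasure μ]
    (g : Ω → ℝ) (hg : Measurable g) (hg0 : ∀ x, 0 ≤ g x)
    (hgi : Integrable g μ)
    (hgl : Integrable (fun x => g x * Real.log (g x)) μ)
    (S : Set Ω) (hS : MeasurableSet S)
    (hgS : ∀ᵐ x ∂μ, x ∉ S → g x = 0)
    (c : ℝ) (hc : 0 < c) (hμS : μ S ≤ ENNReal.ofReal (Real.exp (-c))) :
    c * ∫ x, g x ∂μ ≤ Ent μ g :=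
  mul_integral_le_ent_of_support_small_general μ g hg0 hgi hgl S hgS c hμS
end

section
/- Let μ be a probability measure on a measurable space (Ω, 𝓕), let g : Ω → [0,∞) be measurable with g and g·log g integrable with respect to μ, and let h : Ω → ℝ be measurable with ∫_Ω e^h dμ ≤ 1 and with g·h integrable. Then ∫_Ω g·h dμ ≤ Ent_μ(g). -/
open MeasureTheory Real Set

/-- Young-type inequality: `a b ≤ a log a - a log m - a + m e^b` for `a ≥ 0`, `m > 0`. -/
lemma young_ent (m a b : ℝ) (hm : 0 < m) (ha : 0 ≤ a) :
    a * b ≤ a * Real.log a - a * Real.log m - a + m * Real.exp b := by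
  rcases ha.eq_or_lt with h0 | h0
  · simp only [← h0, zero_mul, sub_zero, zero_add, sub_self]
    positivity
  · have h1 : b - Real.log a + Real.log m + 1 ≤ Real.exp (b - Real.log a + Real.log m) :=
      Real.add_one_le_exp _
    have h2 : Real.exp (b - Real.log a + Real.log m) = m * Real.exp b / a := by
      rw [Real.exp_add, Real.exp_sub, Real.exp_log hm, Real.exp_log h0]
      ring
    rw [h2] at h1
    have h3 := (le_div_iff₀ h0).mp h1
    nlinarith

/-- Variational formula for entropy (2.11): if `∫ e^h dμ ≤ 1`, then `∫ g h dμ ≤ Ent_μ(g)`. -/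
theorem integral_mul_le_ent {Ω : Type*} [MeasurableSpace Ω]
    (μ : Measure Ω) [IsProbabilityMeasure μ]
    (g : Ω → ℝ) (hg : Measurable g) (hg0 : ∀ x, 0 ≤ g x)
    (hgi : Integrable g μ)
    (hgl : Integrable (fun x => g x * Real.log (g x)) μ)
    (h : Ω → ℝ) (hh : Measurable h)
    (hexp : ∫⁻ x, ENNReal.ofReal (Real.exp (h x)) ∂μ ≤ 1)
    (hgh : Integrable (fun x => g x * h x) μ) :
    ∫ x, g x * h x ∂μ ≤ Ent μ g := by
  set m : ℝ := ∫ x, g x ∂μ with hm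
  have hm0 : 0 ≤ m := integral_nonneg hg0
  rcases hm0.eq_or_lt with hmz | hmpos
  · -- `∫ g = 0`, so `g = 0` a.e.
    have hg_ae : g =ᵐ[μ] 0 := by
      rw [← integral_eq_zero_iff_of_nonneg hg0 hgi]
      exact hmz.symm
    have h1 : ∫ x, g x * h x ∂μ = 0 := by
      rw [integral_eq_zero_iff_of_nonneg_ae]
      · filter_upwards [hg_ae] with x hx
        simp [hx]
      · filter_upwards [hg_ae] with x hx
        simp [hx]
      · exact hgh
    have h2 : ∫ x, g x * Real.log (g x) ∂μ = 0 := by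
      rw [integral_eq_zero_iff_of_nonneg_ae]
      · filter_upwards [hg_ae] with x hx
        simp [hx]
      · filter_upwards [hg_ae] with x hx
        simp [hx]
      · exact hgl
    simp [Ent, h1, h2, ← hm, ← hmz]
  · -- `m > 0`
    have he_meas : Measurable fun x => Real.exp (h x) := hh.exp
    have he_int : Integrable (fun x => Real.exp (h x)) μ := by
      refine ⟨he_meas.aestronglyMeasurable, ?_⟩
      rw [hasFiniteIntegral_iff_ofReal (Filter.Eventually.of_forall fun x => (Real.exp_pos _).le)]
      exact lt_of_le_of_lt hexp (by norm_num)
    have he_le : ∫ x, Real.exp (h x) ∂μ ≤ 1 := by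
      rw [integral_eq_lintegral_of_nonneg_ae (Filter.Eventually.of_forall
        fun x => (Real.exp_pos _).le) he_meas.aestronglyMeasurable]
      exact ENNReal.toReal_le_of_le_ofReal zero_le_one (by simpa using hexp)
    have hrhs_int : Integrable (fun x =>
        g x * Real.log (g x) - g x * Real.log m - g x + m * Real.exp (h x)) μ :=
      ((hgl.sub (hgi.mul_const (Real.log m))).sub hgi).add (he_int.const_mul m)
    have hmono : ∫ x, g x * h x ∂μ ≤ ∫ x,
        (g x * Real.log (g x) - g x * Real.log m - g x + m * Real.exp (h x)) ∂μ :=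
      integral_mono hgh hrhs_int fun x => young_ent m (g x) (h x) hmpos (hg0 x)
    have heq : ∫ x, (g x * Real.log (g x) - g x * Real.log m - g x + m * Real.exp (h x)) ∂μ
        = (∫ x, g x * Real.log (g x) ∂μ) - m * Real.log m - m
          + m * ∫ x, Real.exp (h x) ∂μ := by
      have i1 : Integrable (fun x => g x * Real.log (g x) - g x * Real.log m) μ :=
        hgl.sub (hgi.mul_const _)
      have i2 : Integrable (fun x => g x * Real.log (g x) - g x * Real.log m - g x) μ :=
        i1.sub hgi
      rw [integral_add i2 (he_int.const_mul m),
        integral_sub i1 hgi,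
        integral_sub hgl (hgi.mul_const (Real.log m)),
        integral_mul_const, integral_const_mul, ← hm]
    rw [heq] at hmono
    have : m * ∫ x, Real.exp (h x) ∂μ ≤ m := by
      calc m * ∫ x, Real.exp (h x) ∂μ ≤ m * 1 := by
            exact mul_le_mul_of_nonneg_left he_le hmpos.le
        _ = m := mul_one m
    unfold Ent
    rw [← hm]
    linarith
end

section
/- Let μ be a probability measure on a measurable space (Ω, 𝓕), let f : Ω → ℝ be measurable, let δ > 2 and let n ≥ 1 be an integer. Set A_n := {x ∈ Ω : δ^n ≤ f(x)² < δ^{n+1}} and f_{n−1} := min((|f| − δ^{(n−1)/2})₊, δ^{n/2} − δ^{(n−1)/2}). Then ∫_{A_n} f² log f² dμ ≤ [(n+1)(log δ)·δ^{n+1} / (δ^{n/2} − δ^{(n−1)/2})²] · ∫_Ω f_{n−1}² dμ. -/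
open MeasureTheory Real Set

/-! On `A_n` we have `1 ≤ f² < δ^{n+1}`, so the integrand is at most `(n+1) log δ · δ^{n+1}`;
and `|f| ≥ δ^{n/2}` there, so `f_{n-1}` is saturated at `c = δ^{n/2} - δ^{(n-1)/2}`.
Markov's inequality for `f_{n-1}²` then gives `c² μ(A_n) ≤ ∫ f_{n-1}²`. -/

section Truncation

variable {Ω : Type*} (f : Ω → ℝ) {δ : ℝ} (m : ℕ)

lemma trunc_nonneg (hδ : 1 ≤ δ) (x : Ω) : 0 ≤ trunc f δ m x :=
  le_min (le_max_right _ _) <| sub_nonneg.2 <| Real.rpow_le_rpow_of_exponent_le hδ (by linarith)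

lemma trunc_le (x : Ω) : trunc f δ m x ≤ δ ^ (((m : ℝ) + 1) / 2) - δ ^ ((m : ℝ) / 2) :=
  min_le_right _ _

lemma trunc_eq_of_le_abs {x : Ω} (hx : δ ^ (((m : ℝ) + 1) / 2) ≤ |f x|) :
    trunc f δ m x = δ ^ (((m : ℝ) + 1) / 2) - δ ^ ((m : ℝ) / 2) := by
  unfold trunc
  rw [min_eq_right]
  exact (sub_le_sub_right hx _).trans (le_max_left _ _)

lemma measurable_trunc [MeasurableSpace Ω] (hf : Measurable f) : Measurable (trunc f δ m) :=
  ((hf.abs.sub measurable_const).max measurable_const).min measurable_const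

lemma mul_measureReal_le_integral_trunc_sq [MeasurableSpace Ω] {μ : Measure Ω} [IsFiniteMeasure μ]
    (hf : Measurable f) (hδ : 1 ≤ δ) :
    (δ ^ (((m : ℝ) + 1) / 2) - δ ^ ((m : ℝ) / 2)) ^ 2 *
        μ.real {x | δ ^ (((m : ℝ) + 1) / 2) ≤ |f x|} ≤
      ∫ x, trunc f δ m x ^ 2 ∂μ := by
  set c := δ ^ (((m : ℝ) + 1) / 2) - δ ^ ((m : ℝ) / 2)
  have hint : Integrable (fun x => trunc f δ m x ^ 2) μ := by
    refine Integrable.of_bound ((measurable_trunc f m hf).pow_const 2).aestronglyMeasurable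
      (c ^ 2) (ae_of_all _ fun x => ?_)
    rw [Real.norm_eq_abs, abs_sq]
    exact pow_le_pow_left₀ (trunc_nonneg f m hδ x) (trunc_le f m x) 2
  calc c ^ 2 * μ.real {x | δ ^ (((m : ℝ) + 1) / 2) ≤ |f x|}
      ≤ c ^ 2 * μ.real {x | c ^ 2 ≤ trunc f δ m x ^ 2} := by
        refine mul_le_mul_of_nonneg_left (measureReal_mono fun x hx => ?_) (sq_nonneg c)
        rw [Set.mem_ofPred_eq, trunc_eq_of_le_abs f m hx]
    _ ≤ ∫ x, trunc f δ m x ^ 2 ∂μ :=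
        mul_meas_ge_le_integral_of_nonneg (ae_of_all _ fun x => sq_nonneg _) hint _

end Truncation

lemma abs_mul_log_le_mul_log {t M : ℝ} (h1 : 1 ≤ t) (h2 : t ≤ M) :
    |t * Real.log t| ≤ M * Real.log M := by
  have hexp : Real.exp (-1) ≤ 1 := Real.exp_le_one_iff.2 (by norm_num)
  rw [abs_of_nonneg (mul_nonneg (by linarith) (Real.log_nonneg h1))]
  exact Real.mul_log_strictMonoOn.monotoneOn (hexp.trans h1 : Real.exp (-1) ≤ t)
    (hexp.trans (h1.trans h2) : Real.exp (-1) ≤ M) h2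

lemma norm_setIntegral_sq_mul_log_sq_le {Ω : Type*} [MeasurableSpace Ω] (μ : Measure Ω)
    [IsFiniteMeasure μ] (f : Ω → ℝ) {δ s : ℝ} (hδ : 1 ≤ δ) (hs : 0 ≤ s) :
    ‖∫ x in {x | δ ^ s ≤ f x ^ 2 ∧ f x ^ 2 < δ ^ (s + 1)}, f x ^ 2 * Real.log (f x ^ 2) ∂μ‖ ≤
      (s + 1) * Real.log δ * δ ^ (s + 1) *
        μ.real {x | δ ^ s ≤ f x ^ 2 ∧ f x ^ 2 < δ ^ (s + 1)} := by
  refine norm_setIntegral_le_of_norm_le_const (measure_lt_top _ _) fun x hx => ?_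
  refine (abs_mul_log_le_mul_log ((Real.one_le_rpow hδ hs).trans hx.1) hx.2.le).trans_eq ?_
  rw [Real.log_rpow (by linarith)]
  ring

lemma rpow_div_two_le_abs {δ s y : ℝ} (hδ : 0 ≤ δ) (h : δ ^ s ≤ y ^ 2) : δ ^ (s / 2) ≤ |y| := by
  have hsq : (δ ^ (s / 2)) ^ 2 = δ ^ s := by
    rw [← Real.rpow_natCast, ← Real.rpow_mul hδ]
    norm_num
  simpa [abs_of_nonneg (Real.rpow_nonneg hδ _)] using sq_le_sq.1 (hsq.trans_le h)

/-- Estimate (2.6): the entropy integrand over the slice `A_n` is controlled by the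
`L²`-norm of the truncation `f_{n-1}`. -/
theorem setIntegral_sq_log_le {Ω : Type*} [MeasurableSpace Ω]
    (μ : Measure Ω) [IsProbabilityMeasure μ]
    (f : Ω → ℝ) (hf : Measurable f) (δ : ℝ) (hδ : 2 < δ) (n : ℕ) (hn : 1 ≤ n) :
    (∫ x in {x | δ ^ (n : ℝ) ≤ f x ^ 2 ∧ f x ^ 2 < δ ^ ((n : ℝ) + 1)},
        f x ^ 2 * Real.log (f x ^ 2) ∂μ) ≤
      ((n : ℝ) + 1) * Real.log δ * δ ^ ((n : ℝ) + 1) /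
          (δ ^ ((n : ℝ) / 2) - δ ^ (((n : ℝ) - 1) / 2)) ^ 2 *
        ∫ x, trunc f δ (n - 1) x ^ 2 ∂μ := by
  have hδ1 : 1 ≤ δ := by linarith
  have hmarkov := mul_measureReal_le_integral_trunc_sq f (n - 1) (μ := μ) hf hδ1
  rw [Nat.cast_sub hn, Nat.cast_one, sub_add_cancel] at hmarkov
  set c := δ ^ ((n : ℝ) / 2) - δ ^ (((n : ℝ) - 1) / 2)
  set K := ((n : ℝ) + 1) * Real.log δ * δ ^ ((n : ℝ) + 1)
  have hK : 0 ≤ K := mul_nonneg (mul_nonneg (by positivity) (Real.log_nonneg hδ1)) (by positivity)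
  have hc : 0 < c := sub_pos.2 <| Real.rpow_lt_rpow_of_exponent_lt (by linarith) (by linarith)
  calc ∫ x in {x | δ ^ (n : ℝ) ≤ f x ^ 2 ∧ f x ^ 2 < δ ^ ((n : ℝ) + 1)},
        f x ^ 2 * Real.log (f x ^ 2) ∂μ
      ≤ K * μ.real {x | δ ^ (n : ℝ) ≤ f x ^ 2 ∧ f x ^ 2 < δ ^ ((n : ℝ) + 1)} :=
        (le_abs_self _).trans (norm_setIntegral_sq_mul_log_sq_le μ f hδ1 n.cast_nonneg)
    _ ≤ K * μ.real {x | δ ^ ((n : ℝ) / 2) ≤ |f x|} :=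
        mul_le_mul_of_nonneg_left
          (measureReal_mono fun x hx => rpow_div_two_le_abs (by linarith) hx.1) hK
    _ = K / c ^ 2 * (c ^ 2 * μ.real {x | δ ^ ((n : ℝ) / 2) ≤ |f x|}) := by field_simp
    _ ≤ K / c ^ 2 * ∫ x, trunc f δ (n - 1) x ^ 2 ∂μ := by gcongr
end

section
/- Let μ be a probability measure on a measurable space (Ω, 𝓕), let δ > 2, and let f : Ω → ℝ be a bounded measurable function with ∫_Ω f² dμ = 1. Set A_n := {x ∈ Ω : δ^n ≤ f(x)² < δ^{n+1}}. Then there exists a constant c = c(δ) > 0, depending only on δ, such that for every integer k ≥ 1, ∑_{n=k+1}^∞ ∫_{A_n} f² log f² dμ ≤ c·k·δ^{−k}·‖f‖_∞², where ‖f‖_∞ is the μ-essential supremum of |f|. -/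
open MeasureTheory Real Set

/-- Estimate (2.8): the tail of the entropy sum over the slices `A_n`, `n ≥ k+1`,
is bounded by `c k δ^{-k} ‖f‖_∞²` with `c` depending only on `δ`. -/
theorem tsum_setIntegral_sq_log_tail_le {Ω : Type*} [MeasurableSpace Ω]
    (δ : ℝ) (hδ : 2 < δ) :
    ∃ c > (0 : ℝ), ∀ (μ : Measure Ω), IsProbabilityMeasure μ →
      ∀ f : Ω → ℝ, Measurable f → (∃ M : ℝ, ∀ x, |f x| ≤ M) →
      (∫ x, f x ^ 2 ∂μ) = 1 → ∀ k : ℕ, 1 ≤ k →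
      (∑' m : ℕ, ∫ x in {x | δ ^ ((k + 1 + m : ℕ) : ℝ) ≤ f x ^ 2 ∧
          f x ^ 2 < δ ^ (((k + 1 + m : ℕ) : ℝ) + 1)},
        f x ^ 2 * Real.log (f x ^ 2) ∂μ) ≤
      c * (k : ℝ) * δ ^ (-(k : ℝ)) * essNorm μ f ^ 2 := by
  classical
  have hδ0 : (0:ℝ) < δ := by linarith
  have hδ1 : (1:ℝ) < δ := by linarith
  have hlog : 0 < Real.log δ := Real.log_pos hδ1
  refine ⟨12 * Real.log δ, by positivity, ?_⟩
  intro μ hμ f hf hbdd hint k hk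
  haveI := hμ
  obtain ⟨M, hM⟩ := hbdd
  set N := essNorm μ f with hNdef
  have hN0 : 0 ≤ N := ENNReal.toReal_nonneg
  -- a.e. bound by N
  have hNae : ∀ᵐ x ∂μ, |f x| ≤ N := by
    have h1 : ∀ᵐ x ∂μ, (‖f x‖₊ : ENNReal) ≤ eLpNormEssSup f μ := ae_le_eLpNormEssSup
    have hfin : eLpNormEssSup f μ ≠ ⊤ := by
      refine ne_top_of_le_ne_top ENNReal.ofReal_ne_top
        (eLpNormEssSup_le_of_ae_bound (C := M) (ae_of_all _ fun x => ?_))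
      simpa [Real.norm_eq_abs] using hM x
    filter_upwards [h1] with x hx
    have h2 := ENNReal.toReal_mono hfin hx
    simpa [hNdef, essNorm, eLpNorm_exponent_top, Real.norm_eq_abs] using h2
  -- measurability
  have hmeas2 : Measurable fun x => f x ^ 2 := hf.pow_const 2
  have hfsq_le : ∀ x, f x ^ 2 ≤ M ^ 2 := fun x => by
    rw [← sq_abs]; exact pow_le_pow_left₀ (abs_nonneg _) (hM x) 2
  -- integrability of f^2
  have hint2 : Integrable (fun x => f x ^ 2) μ := by
    refine (integrable_const (M ^ 2)).mono' hmeas2.aestronglyMeasurable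
      (ae_of_all _ fun x => ?_)
    rw [Real.norm_eq_abs, abs_of_nonneg (sq_nonneg _)]
    exact hfsq_le x
  -- integrability of f^2 log f^2
  have habs : ∀ t : ℝ, 0 ≤ t → |t * Real.log t| ≤ 1 + t ^ 2 := by
    intro t ht
    rcases ht.eq_or_lt with h | h
    · simp [← h]
    · have hup := Real.log_le_sub_one_of_pos h
      have hlo := Real.log_le_sub_one_of_pos (inv_pos.2 h)
      rw [Real.log_inv] at hlo
      have hti : t * t⁻¹ = 1 := mul_inv_cancel₀ h.ne'
      rw [abs_le]
      constructor
      · nlinarith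
      · nlinarith
  have hg_int : Integrable (fun x => f x ^ 2 * Real.log (f x ^ 2)) μ := by
    refine (integrable_const (1 + (M ^ 2) ^ 2)).mono'
      (hmeas2.mul hmeas2.log).aestronglyMeasurable (ae_of_all _ fun x => ?_)
    rw [Real.norm_eq_abs]
    refine le_trans (habs _ (sq_nonneg _)) ?_
    have h1 := hfsq_le x
    have h2 := sq_nonneg (f x)
    nlinarith
  -- Markov
  have hmark : ∀ n : ℕ, (μ {x | δ ^ n ≤ f x ^ 2}).toReal ≤ (δ ^ n)⁻¹ := by
    intro n
    have hp : (0:ℝ) < δ ^ n := pow_pos hδ0 n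
    have h := mul_meas_ge_le_integral_of_nonneg
      (ae_of_all μ fun x => sq_nonneg (f x)) hint2 (δ ^ n)
    rw [hint] at h
    have h2 := mul_le_mul_of_nonneg_left h (inv_nonneg.2 hp.le)
    rwa [← mul_assoc, inv_mul_cancel₀ hp.ne', one_mul, mul_one] at h2
  -- per-slice bound
  have hterm : ∀ n : ℕ,
      (∫ x in {x | δ ^ n ≤ f x ^ 2 ∧ f x ^ 2 < δ ^ (n + 1)},
        f x ^ 2 * Real.log (f x ^ 2) ∂μ) ≤
      (((n:ℝ) + 1) * Real.log δ * N ^ 2) * (δ ^ n)⁻¹ := by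
    intro n
    set S : Set Ω := {x | δ ^ n ≤ f x ^ 2 ∧ f x ^ 2 < δ ^ (n + 1)} with hS
    have hSm : MeasurableSet S := hmeas2 measurableSet_Ico
    set C : ℝ := ((n:ℝ) + 1) * Real.log δ * N ^ 2 with hCdef
    have hC0 : 0 ≤ C := by
      refine mul_nonneg (mul_nonneg (by positivity) hlog.le) (by positivity)
    have step1 : (∫ x in S, f x ^ 2 * Real.log (f x ^ 2) ∂μ) ≤ ∫ _ in S, C ∂μ := by
      refine integral_mono_ae hg_int.integrableOn (integrable_const C) ?_
      refine (ae_restrict_iff' hSm).2 ?_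
      filter_upwards [hNae] with x hx hxS
      obtain ⟨h1, h2⟩ := hxS
      have he1 : (1:ℝ) ≤ f x ^ 2 := le_trans (one_le_pow₀ hδ1.le) h1
      have hpos : (0:ℝ) < f x ^ 2 := lt_of_lt_of_le one_pos he1
      have hlog1 : Real.log (f x ^ 2) ≤ ((n:ℝ) + 1) * Real.log δ := by
        have h3 := Real.log_le_log hpos h2.le
        have h4 : Real.log (δ ^ (n + 1)) = ((n:ℝ) + 1) * Real.log δ := by
          rw [Real.log_pow]; push_cast; ring
        linarith
      have hfx : f x ^ 2 ≤ N ^ 2 := by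
        rw [← sq_abs]; exact pow_le_pow_left₀ (abs_nonneg _) hx 2
      calc f x ^ 2 * Real.log (f x ^ 2)
          ≤ N ^ 2 * (((n:ℝ) + 1) * Real.log δ) :=
            mul_le_mul hfx hlog1 (Real.log_nonneg he1) (by positivity)
        _ = C := by rw [hCdef]; ring
    rw [setIntegral_const, smul_eq_mul] at step1
    have hmeasS : (μ S).toReal ≤ (δ ^ n)⁻¹ := by
      refine le_trans (ENNReal.toReal_mono (measure_ne_top μ _)
        (measure_mono fun x hx => hx.1)) (hmark n)
    calc (∫ x in S, f x ^ 2 * Real.log (f x ^ 2) ∂μ) ≤ (μ S).toReal * C := step1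
      _ ≤ (δ ^ n)⁻¹ * C := mul_le_mul_of_nonneg_right hmeasS hC0
      _ = C * (δ ^ n)⁻¹ := by ring
  -- nonnegativity of each slice integral
  have hnonneg : ∀ n : ℕ, 0 ≤
      ∫ x in {x | δ ^ n ≤ f x ^ 2 ∧ f x ^ 2 < δ ^ (n + 1)},
        f x ^ 2 * Real.log (f x ^ 2) ∂μ := by
    intro n
    refine setIntegral_nonneg (hmeas2 measurableSet_Ico) fun x hx => ?_
    exact mul_nonneg (sq_nonneg _)
      (Real.log_nonneg (le_trans (one_le_pow₀ hδ1.le) hx.1))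
  -- rewrite rpow as pow in the goal
  have hr1 : ∀ n : ℕ, δ ^ ((n : ℕ) : ℝ) = δ ^ n := fun n => Real.rpow_natCast δ n
  have hr2 : ∀ n : ℕ, δ ^ (((n : ℕ) : ℝ) + 1) = δ ^ (n + 1) := by
    intro n
    rw [show ((n:ℝ) + 1) = ((n + 1 : ℕ) : ℝ) by push_cast; ring, Real.rpow_natCast]
  simp only [hr1, hr2]
  -- the comparison series
  set C1 : ℝ := 3 * Real.log δ * (k:ℝ) * (δ ^ k)⁻¹ * N ^ 2 with hC1def
  have hsum1 : Summable fun m : ℕ => (m:ℝ) * (2⁻¹:ℝ) ^ m := by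
    simpa using summable_pow_mul_geometric_of_norm_lt_one 1 (r := (2⁻¹:ℝ)) (by norm_num)
  have hsum2 : Summable fun m : ℕ => (2⁻¹:ℝ) ^ m :=
    summable_geometric_of_lt_one (by norm_num) (by norm_num)
  have hsum0 : Summable fun m : ℕ => ((m:ℝ) + 1) * (2⁻¹:ℝ) ^ m := by
    have := hsum1.add hsum2
    simpa [add_mul, one_mul] using this
  have htsum0 : ∑' m : ℕ, ((m:ℝ) + 1) * (2⁻¹:ℝ) ^ m = 4 := by
    have heq : (fun m : ℕ => ((m:ℝ) + 1) * (2⁻¹:ℝ) ^ m)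
        = fun m : ℕ => (m:ℝ) * (2⁻¹:ℝ) ^ m + (2⁻¹:ℝ) ^ m := by
      funext m; ring
    rw [heq, Summable.tsum_add hsum1 hsum2,
      tsum_coe_mul_geometric_of_norm_lt_one (by rw [norm_inv]; norm_num),
      tsum_geometric_of_lt_one (by norm_num) (by norm_num)]
    norm_num
  have hbsum : Summable fun m : ℕ => C1 * (((m:ℝ) + 1) * (2⁻¹:ℝ) ^ m) := hsum0.mul_left C1
  -- termwise comparison
  have hle : ∀ m : ℕ,
      (∫ x in {x | δ ^ (k + 1 + m) ≤ f x ^ 2 ∧ f x ^ 2 < δ ^ (k + 1 + m + 1)},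
        f x ^ 2 * Real.log (f x ^ 2) ∂μ) ≤ C1 * (((m:ℝ) + 1) * (2⁻¹:ℝ) ^ m) := by
    intro m
    refine le_trans (hterm (k + 1 + m)) ?_
    have hk1 : (1:ℝ) ≤ (k:ℝ) := by exact_mod_cast hk
    have key : ((↑(k + 1 + m):ℝ) + 1) * ((δ ^ (k + 1 + m))⁻¹)
        ≤ (3 * (k:ℝ) * ((m:ℝ) + 1)) * ((δ ^ k)⁻¹ * (2⁻¹ * (2⁻¹:ℝ) ^ m)) := by
      have e1 : (δ ^ (k + 1 + m))⁻¹ = (δ ^ k)⁻¹ * (δ⁻¹ * (δ ^ m)⁻¹) := by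
        rw [pow_add, pow_add, pow_one, mul_inv, mul_inv, mul_assoc]
      rw [e1]
      have h2 : δ⁻¹ ≤ (2:ℝ)⁻¹ := by
        rw [inv_le_inv₀ hδ0 (by norm_num)]; exact hδ.le
      have h3 : (δ ^ m)⁻¹ ≤ (2⁻¹:ℝ) ^ m := by
        rw [inv_pow]
        exact inv_anti₀ (by positivity) (pow_le_pow_left₀ (by norm_num) hδ.le m)
      have h4 : ((↑(k + 1 + m):ℝ) + 1) ≤ 3 * (k:ℝ) * ((m:ℝ) + 1) := by
        push_cast; nlinarith [Nat.cast_nonneg (α := ℝ) m]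
      have h5 : δ⁻¹ * (δ ^ m)⁻¹ ≤ 2⁻¹ * (2⁻¹:ℝ) ^ m := by
        exact mul_le_mul h2 h3 (by positivity) (by norm_num)
      have h6 : (δ ^ k)⁻¹ * (δ⁻¹ * (δ ^ m)⁻¹) ≤ (δ ^ k)⁻¹ * (2⁻¹ * (2⁻¹:ℝ) ^ m) :=
        mul_le_mul_of_nonneg_left h5 (by positivity)
      exact mul_le_mul h4 h6 (by positivity) (by positivity)
    calc ((↑(k + 1 + m):ℝ) + 1) * Real.log δ * N ^ 2 * (δ ^ (k + 1 + m))⁻¹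
        = (Real.log δ * N ^ 2) * (((↑(k + 1 + m):ℝ) + 1) * (δ ^ (k + 1 + m))⁻¹) := by ring
      _ ≤ (Real.log δ * N ^ 2) *
          ((3 * (k:ℝ) * ((m:ℝ) + 1)) * ((δ ^ k)⁻¹ * (2⁻¹ * (2⁻¹:ℝ) ^ m))) := by
          refine mul_le_mul_of_nonneg_left key (by positivity)
      _ ≤ C1 * (((m:ℝ) + 1) * (2⁻¹:ℝ) ^ m) := by
          rw [hC1def]
          have h7 : (2⁻¹:ℝ) ≤ 1 := by norm_num
          nlinarith [mul_nonneg (mul_nonneg hlog.le (sq_nonneg N))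
            (mul_nonneg (mul_nonneg (mul_nonneg (by positivity : (0:ℝ) ≤ 3 * (k:ℝ)) (by positivity : (0:ℝ) ≤ (m:ℝ) + 1)) (by positivity : (0:ℝ) ≤ (δ ^ k)⁻¹)) (by positivity : (0:ℝ) ≤ (2⁻¹:ℝ) ^ m))]
  have hsumterm : Summable fun m : ℕ =>
      ∫ x in {x | δ ^ (k + 1 + m) ≤ f x ^ 2 ∧ f x ^ 2 < δ ^ (k + 1 + m + 1)},
        f x ^ 2 * Real.log (f x ^ 2) ∂μ :=
    Summable.of_nonneg_of_le (fun m => hnonneg (k + 1 + m)) hle hbsum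
  calc (∑' m : ℕ, ∫ x in {x | δ ^ (k + 1 + m) ≤ f x ^ 2 ∧ f x ^ 2 < δ ^ (k + 1 + m + 1)},
        f x ^ 2 * Real.log (f x ^ 2) ∂μ)
      ≤ ∑' m : ℕ, C1 * (((m:ℝ) + 1) * (2⁻¹:ℝ) ^ m) := Summable.tsum_le_tsum hle hsumterm hbsum
    _ = C1 * 4 := by rw [tsum_mul_left, htsum0]
    _ = 12 * Real.log δ * (k:ℝ) * δ ^ (-(k:ℝ)) * N ^ 2 := by
        rw [Real.rpow_neg hδ0.le, Real.rpow_natCast, hC1def]; ring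
end

section
/- Let μ be a probability measure on a measurable space (Ω, 𝓕), let δ > 1, let k ≥ 0 be an integer, and let f : Ω → ℝ be measurable with ∫_Ω f² dμ = 1. Then ∫_{{x : f(x)² < δ^{k+1}}} f² dμ ≤ 1/4 + δ^{k+1}·(∫_Ω |f| dμ)². -/
open MeasureTheory Real Set

/-- Estimate (2.14): for `f` with `μ(f²) = 1`,
`∫_{f² < δ^{k+1}} f² dμ ≤ 1/4 + δ^{k+1} μ(|f|)²`. -/
theorem setIntegral_sq_below_level_le {Ω : Type*} [MeasurableSpace Ω]
    (μ : Measure Ω) [IsProbabilityMeasure μ]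
    (δ : ℝ) (hδ : 1 < δ) (k : ℕ)
    (f : Ω → ℝ) (hf : Measurable f) (hf2 : (∫ x, f x ^ 2 ∂μ) = 1) :
    (∫ x in {x | f x ^ 2 < δ ^ ((k : ℝ) + 1)}, f x ^ 2 ∂μ) ≤
      1 / 4 + δ ^ ((k : ℝ) + 1) * (∫ x, |f x| ∂μ) ^ 2 := by
  have hδ0 : (0:ℝ) < δ := by linarith
  set M : ℝ := δ ^ ((k : ℝ) + 1) with hMdef
  have hM : 0 < M := Real.rpow_pos_of_pos hδ0 _
  set c : ℝ := δ ^ (((k : ℝ) + 1) / 2) with hcdef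
  have hc : 0 < c := Real.rpow_pos_of_pos hδ0 _
  have hcc : c * c = M := by
    rw [hcdef, hMdef, ← Real.rpow_add hδ0]
    ring_nf
  have hint : Integrable (fun x => f x ^ 2) μ := by
    by_contra h
    rw [integral_undef h] at hf2
    norm_num at hf2
  have hintf : Integrable (fun x => |f x|) μ := by
    refine Integrable.mono ((integrable_const (1:ℝ)).add hint) (hf.abs.aestronglyMeasurable) ?_
    filter_upwards with x
    have h1 : |f x| ≤ 1 + f x ^ 2 := by nlinarith [sq_nonneg (|f x| - 1), sq_abs (f x)]
    have h2 : (0:ℝ) ≤ 1 + f x ^ 2 := by positivity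
    simpa [abs_of_nonneg h2, abs_abs] using h1
  have hS : MeasurableSet {x | f x ^ 2 < M} := measurableSet_lt (hf.pow_const 2) measurable_const
  have step1 : (∫ x in {x | f x ^ 2 < M}, f x ^ 2 ∂μ) ≤ ∫ x in {x | f x ^ 2 < M}, c * |f x| ∂μ := by
    refine setIntegral_mono_on (hint.integrableOn) ((hintf.const_mul c).integrableOn) hS ?_
    intro x hx
    have hx' : f x ^ 2 < M := hx
    have habs : |f x| < c := by
      nlinarith [sq_abs (f x), abs_nonneg (f x)]
    nlinarith [sq_abs (f x), abs_nonneg (f x)]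
  have step2 : (∫ x in {x | f x ^ 2 < M}, c * |f x| ∂μ) ≤ ∫ x, c * |f x| ∂μ := by
    refine setIntegral_le_integral (hintf.const_mul c) ?_
    filter_upwards with x
    positivity
  have hI : (0:ℝ) ≤ ∫ x, |f x| ∂μ := integral_nonneg fun x => abs_nonneg _
  have step3 : (∫ x, c * |f x| ∂μ) = c * ∫ x, |f x| ∂μ := by rw [MeasureTheory.integral_const_mul]
  have final : c * (∫ x, |f x| ∂μ) ≤ 1 / 4 + M * (∫ x, |f x| ∂μ) ^ 2 := by
    nlinarith [sq_nonneg (c * (∫ x, |f x| ∂μ) - 1/2)]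
  calc (∫ x in {x | f x ^ 2 < M}, f x ^ 2 ∂μ) ≤ ∫ x in {x | f x ^ 2 < M}, c * |f x| ∂μ := step1
    _ ≤ ∫ x, c * |f x| ∂μ := step2
    _ = c * ∫ x, |f x| ∂μ := step3
    _ ≤ 1 / 4 + M * (∫ x, |f x| ∂μ) ^ 2 := final
end

section
/- Let C > 0 and θ > 0, and let β_SP(s) := exp(C(1 + s^{−θ})) for s > 0. Then there exist constants c₁, c₂, t₀ > 0 such that for every t ∈ (0, t₀], the set defining ξ₁(t) is nonempty and c₁·(log(1 + t^{−1}))^{−1/θ} ≤ ξ₁(t) ≤ c₂·(log(1 + t^{−1}))^{−1/θ}, where ξ₁(t) := inf{ r/(1 − t·β_SP(r)) : r > 0, 1 − t·β_SP(r) > 0 }. -/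
open MeasureTheory Real Set

/-!
Write `L = log (1 + t⁻¹)`. An admissible `r` has `t β(r) < 1`, hence `β(r) < 1 + t⁻¹`, i.e.
`C (1 + r^{-θ}) < L`, which forces `r > (C / L)^{1/θ}`; and since `r / (1 - t β(r)) ≥ r`, this bounds
`ξ₁(t)` from below. Conversely `r₀ = (2C / L)^{1/θ}` gives `t β(r₀) = t e^C (1 + t⁻¹)^{1/2}`, which is
at most `1/2` for small `t`, so `ξ₁(t) ≤ r₀ / (1 - t β(r₀)) ≤ 2 r₀`.
-/

noncomputable section

def betaSP (C θ r : ℝ) : ℝ :=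
  exp (C * (1 + r ^ (-θ)))

def xi1Set (β : ℝ → ℝ) (t : ℝ) : Set ℝ :=
  {y | ∃ r, 0 < r ∧ 0 < 1 - t * β r ∧ y = r / (1 - t * β r)}

end

section Xi1

variable {β : ℝ → ℝ} {t r : ℝ}

lemma xi1Set_nonempty (hr : 0 < r) (hd : 0 < 1 - t * β r) : (xi1Set β t).Nonempty :=
  ⟨_, r, hr, hd, rfl⟩

lemma xi1_le (hr : 0 < r) (hd : 0 < 1 - t * β r) : xi1 β t ≤ r / (1 - t * β r) := by
  refine csInf_le ⟨0, ?_⟩ ⟨r, hr, hd, rfl⟩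
  rintro _ ⟨s, hs, hd, rfl⟩
  positivity

lemma xi1_le_two_mul (hr : 0 < r) (hβ : t * β r ≤ 1 / 2) : xi1 β t ≤ 2 * r :=
  calc xi1 β t ≤ r / (1 - t * β r) := xi1_le hr (by linarith)
    _ ≤ r / (1 / 2) := div_le_div_of_nonneg_left hr.le (by norm_num) (by linarith)
    _ = 2 * r := by ring

lemma le_xi1 (ht : 0 ≤ t) (hβ : ∀ r, 0 ≤ β r) (hne : (xi1Set β t).Nonempty) {a : ℝ}
    (ha : ∀ r, 0 < r → t * β r < 1 → a ≤ r) : a ≤ xi1 β t := by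
  refine le_csInf hne ?_
  rintro _ ⟨r, hr, hd, rfl⟩
  calc a ≤ r := ha r hr (by linarith)
    _ ≤ r / (1 - t * β r) := le_div_self hr.le hd (by nlinarith [hβ r])

end Xi1

section BetaSP

variable {C θ t r : ℝ}

lemma log_one_add_inv_pos (ht : 0 < t) : 0 < log (1 + t⁻¹) :=
  log_pos (by linarith [inv_pos.2 ht])

lemma log_one_add_inv_le (ht : 0 < t) (ht₁ : t ≤ 1) : log (1 + t⁻¹) ≤ log 2 - log t := by
  have h : 1 + t⁻¹ ≤ 2 * t⁻¹ := by linarith [(one_le_inv₀ ht).2 ht₁]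
  calc log (1 + t⁻¹) ≤ log (2 * t⁻¹) := log_le_log (by positivity) h
    _ = log 2 - log t := by rw [log_mul two_ne_zero (inv_ne_zero ht.ne'), log_inv]; ring

lemma rpow_inv_lt_of_mul_betaSP_lt_one (hC : 0 < C) (hθ : 0 < θ) (ht : 0 < t) (hr : 0 < r)
    (h : t * betaSP C θ r < 1) : (C / log (1 + t⁻¹)) ^ θ⁻¹ < r := by
  have hL := log_one_add_inv_pos ht
  have hrθ : 0 < r ^ θ := rpow_pos_of_pos hr θ
  have hβ : betaSP C θ r < 1 + t⁻¹ := by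
    have : betaSP C θ r < t⁻¹ := by rw [inv_eq_one_div, lt_div_iff₀' ht]; exact h
    linarith [inv_pos.2 ht]
  have hexp : C + C / r ^ θ < log (1 + t⁻¹) := by
    rw [lt_log_iff_exp_lt (by positivity)]
    rw [betaSP, rpow_neg hr.le] at hβ
    convert hβ using 2
    ring
  have hCr : C < log (1 + t⁻¹) * r ^ θ := (div_lt_iff₀ hrθ).1 (by linarith)
  rw [rpow_inv_lt_iff_of_pos (by positivity) hr.le hθ, div_lt_iff₀ hL]
  linarith

lemma mul_betaSP_le_half (hC : 0 < C) (hθ : 0 < θ) (ht : 0 < t)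
    (ht₀ : t ≤ exp (-(2 * C + 3 * log 2))) :
    t * betaSP C θ ((2 * C / log (1 + t⁻¹)) ^ θ⁻¹) ≤ 1 / 2 := by
  set L := log (1 + t⁻¹)
  have hL : 0 < L := log_one_add_inv_pos ht
  have hlogt : log t ≤ -(2 * C + 3 * log 2) := (log_le_iff_le_exp ht).2 ht₀
  have ht₁ : t ≤ 1 := ht₀.trans (exp_le_one_iff.2 (by linarith [log_pos one_lt_two]))
  have hLt := log_one_add_inv_le ht ht₁
  have hpow : ((2 * C / L) ^ θ⁻¹) ^ (-θ) = L / (2 * C) := by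
    rw [rpow_neg (by positivity), rpow_inv_rpow (by positivity) hθ.ne', inv_div]
  have hexponent : C * (1 + L / (2 * C)) = C + L / 2 := by field_simp
  rw [betaSP, hpow, hexponent, ← exp_log ht, ← exp_add]
  calc exp (log t + (C + L / 2)) ≤ exp (-log 2) := exp_le_exp.2 (by linarith)
    _ = 1 / 2 := by rw [exp_neg, exp_log two_pos, one_div]

end BetaSP

lemma div_rpow_inv_eq {a b θ : ℝ} (ha : 0 ≤ a) (hb : 0 ≤ b) :
    (a / b) ^ θ⁻¹ = a ^ (1 / θ) * b ^ (-(1 / θ)) := by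
  rw [div_rpow ha hb, rpow_neg hb, one_div, div_eq_mul_inv]

/-- Two-sided estimate of `ξ₁` for the rate function `β_SP(s) = exp(C(1 + s^{-θ}))`:
`ξ₁(t) ≍ log^{-1/θ}(1 + t⁻¹)` for small `t`. -/
theorem xi1_asymptotics (C θ : ℝ) (hC : 0 < C) (hθ : 0 < θ) :
    ∃ c₁ > (0 : ℝ), ∃ c₂ > (0 : ℝ), ∃ t₀ > (0 : ℝ), ∀ t : ℝ, 0 < t → t ≤ t₀ →
      ({y | ∃ r, 0 < r ∧ 0 < 1 - t * Real.exp (C * (1 + r ^ (-θ))) ∧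
          y = r / (1 - t * Real.exp (C * (1 + r ^ (-θ))))}.Nonempty ∧
        c₁ * Real.log (1 + t⁻¹) ^ (-(1 / θ)) ≤
          xi1 (fun r => Real.exp (C * (1 + r ^ (-θ)))) t ∧
        xi1 (fun r => Real.exp (C * (1 + r ^ (-θ)))) t ≤
          c₂ * Real.log (1 + t⁻¹) ^ (-(1 / θ))) := by
  refine ⟨C ^ (1 / θ), by positivity, 2 * (2 * C) ^ (1 / θ), by positivity,
    exp (-(2 * C + 3 * log 2)), exp_pos _, fun t ht ht₀ => ?_⟩
  have hL := log_one_add_inv_pos ht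
  have hr₀ : 0 < (2 * C / log (1 + t⁻¹)) ^ θ⁻¹ := by positivity
  have hhalf := mul_betaSP_le_half hC hθ ht ht₀
  have hne : (xi1Set (betaSP C θ) t).Nonempty := xi1Set_nonempty hr₀ (by linarith)
  refine ⟨hne, ?_, ?_⟩
  · rw [← div_rpow_inv_eq hC.le hL.le]
    exact le_xi1 ht.le (fun _ => (exp_pos _).le) hne
      fun r hr h => (rpow_inv_lt_of_mul_betaSP_lt_one hC hθ ht hr h).le
  · calc xi1 (betaSP C θ) t ≤ 2 * (2 * C / log (1 + t⁻¹)) ^ θ⁻¹ := xi1_le_two_mul hr₀ hhalf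
      _ = 2 * (2 * C) ^ (1 / θ) * log (1 + t⁻¹) ^ (-(1 / θ)) := by
        rw [div_rpow_inv_eq (by positivity) hL.le, mul_assoc]
end
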